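/- Let G = (V,E) be a finite simple undirected graph with m ≥ 1 edges and maximum degree at most 2. Let (X_e)_{e∈E} be pairwise independent {0,1}-valued random variables on a finite probability space, each with Pr[X_e = 1] = 1/4. Then there exists an outcome ω of positive probability such that |M(X(ω))| ≥ m/8; in particular, the sample space contains an assignment of bits to the edges inducing a matching of size at least m/8. -/

import Mathlib

/-!
For an edge `e`, let `A_e` be the event that `X_e = 1` while every edge adjacent to `e` has
value `0`, so that `|M(X)| = ∑_e 1_{A_e}`. Since `A_e ⊇ {X_e = 1} \ ⋃_{e' ~ e} {X_{e'} = 1}`,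
pairwise independence gives `P(A_e) ≥ p - d(e) p²` where `d(e) ≤ 2` is the number of edges
adjacent to `e`. With `p = 1/4` this is at least `1/8`, so `E |M(X)| ≥ m/8`, and some atom of
the sample space does at least as well as the mean.
-/

open MeasureTheory ProbabilityTheory Finset

open scoped Classical in
/-- For a 0-1 assignment `x` on the edges, `matchSet G x` is the set of edges `e` of `G` with
`x e = 1` and `x e' = 0` for every edge `e' ≠ e` sharing an endpoint with `e`;
it is a matching of `G`. -/
noncomputable def matchSet {V : Type*} [Fintype V] [DecidableEq V]
    (G : SimpleGraph V) [DecidableRel G.Adj] (x : Sym2 V → ℝ) : Finset (Sym2 V) :=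
  G.edgeFinset.filter (fun e => x e = 1 ∧
    ∀ e' ∈ G.edgeFinset, e' ≠ e → (∃ v, v ∈ e ∧ v ∈ e') → x e' = 0)

section FirstMoment

variable {Ω : Type*} [MeasurableSpace Ω] [Finite Ω] [MeasurableSingletonClass Ω]
  {μ : Measure Ω}

lemma exists_measure_singleton_pos_integral_le [IsProbabilityMeasure μ] (f : Ω → ℝ) :
    ∃ ω, 0 < μ {ω} ∧ ∫ x, f x ∂μ ≤ f ω := by
  have hnull : μ {ω | μ {ω} = 0} = 0 := by
    rw [← Set.biUnion_of_singleton {ω | μ {ω} = 0}]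
    exact (measure_biUnion_null_iff (Set.toFinite _).countable).2 fun ω hω => hω
  obtain ⟨ω, hω, hle⟩ := exists_notMem_null_integral_le Integrable.of_finite hnull
  exact ⟨ω, pos_iff_ne_zero.2 hω, hle⟩

lemma integral_card_eq_sum_measureReal [IsFiniteMeasure μ] {α : Type*} (S : Ω → Finset α)
    (T : Finset α) (hST : ∀ ω, S ω ⊆ T) :
    ∫ ω, (#(S ω) : ℝ) ∂μ = ∑ a ∈ T, μ.real {ω | a ∈ S ω} := by
  have hcard : ∀ ω, (#(S ω) : ℝ) = ∑ a ∈ T, {ω | a ∈ S ω}.indicator 1 ω := by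
    intro ω
    classical
    rw [← inter_eq_right.2 (hST ω), ← filter_mem_eq_inter, card_filter]
    push_cast
    simp [Set.indicator_apply]
  simp_rw [hcard]
  rw [integral_finsetSum _ fun a _ => Integrable.of_finite]
  exact sum_congr rfl fun a _ => integral_indicator_one (Set.toFinite _).measurableSet

end FirstMoment

lemma sub_sum_measureReal_inter_le_measureReal_diff_biUnion {Ω ι : Type*} [MeasurableSpace Ω]
    {μ : Measure Ω} [IsFiniteMeasure μ] (B : Set Ω) (s : Finset ι) (C : ι → Set Ω) :
    μ.real B - ∑ i ∈ s, μ.real (B ∩ C i) ≤ μ.real (B \ ⋃ i ∈ s, C i) := by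
  have hdiff : B \ ⋃ i ∈ s, C i = B \ ⋃ i ∈ s, (B ∩ C i) := by
    ext ω; simp +contextual
  rw [hdiff]
  linarith [le_measureReal_sdiff (s₁ := B) (measure_ne_top μ (⋃ i ∈ s, (B ∩ C i))),
    measureReal_biUnion_finset_le (μ := μ) s fun i => B ∩ C i]

section Graph

variable {V : Type*} [Fintype V] [DecidableEq V] (G : SimpleGraph V) [DecidableRel G.Adj]

def adjacentEdges (e : Sym2 V) : Finset (Sym2 V) :=
  G.edgeFinset.filter fun e' => e' ≠ e ∧ ∃ v, v ∈ e ∧ v ∈ e'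

lemma mem_matchSet_iff {x : Sym2 V → ℝ} {e : Sym2 V} :
    e ∈ matchSet G x ↔ e ∈ G.edgeFinset ∧ x e = 1 ∧ ∀ e' ∈ adjacentEdges G e, x e' = 0 := by
  simp only [matchSet, adjacentEdges, mem_filter]
  grind

lemma card_adjacentEdges_add_two_le {a b : V} (hab : G.Adj a b) :
    #(adjacentEdges G s(a, b)) + 2 ≤ G.degree a + G.degree b := by
  have hsub : adjacentEdges G s(a, b) ⊆
      (G.incidenceFinset a).erase s(a, b) ∪ (G.incidenceFinset b).erase s(a, b) := by
    intro e he
    obtain ⟨heG, hne, v, hv, hve⟩ := mem_filter.1 he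
    rw [SimpleGraph.mem_edgeFinset] at heG
    rcases Sym2.mem_iff.1 hv with rfl | rfl
    · exact mem_union_left _ (mem_erase.2 ⟨hne, (G.mem_incidenceFinset _ _).2 ⟨heG, hve⟩⟩)
    · exact mem_union_right _ (mem_erase.2 ⟨hne, (G.mem_incidenceFinset _ _).2 ⟨heG, hve⟩⟩)
  have hcard (v : V) (hv : v ∈ s(a, b)) :
      #((G.incidenceFinset v).erase s(a, b)) + 1 = G.degree v := by
    rw [card_erase_add_one ((G.mem_incidenceFinset _ _).2 ⟨hab, hv⟩),
      G.card_incidenceFinset_eq_degree]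
  have hunion := (card_le_card hsub).trans (card_union_le _ _)
  have hdega := hcard a (Sym2.mem_mk_left a b)
  have hdegb := hcard b (Sym2.mem_mk_right a b)
  omega

lemma card_adjacentEdges_le_two (hdeg : ∀ v, G.degree v ≤ 2) {e : Sym2 V}
    (he : e ∈ G.edgeFinset) : #(adjacentEdges G e) ≤ 2 := by
  induction e using Sym2.ind with
  | h a b =>
    linarith [card_adjacentEdges_add_two_le G (SimpleGraph.mem_edgeFinset.1 he), hdeg a, hdeg b]

end Graph

lemma le_measureReal_mem_matchSet {V : Type*} [Fintype V] [DecidableEq V]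
    (G : SimpleGraph V) [DecidableRel G.Adj]
    {Ω : Type*} [MeasurableSpace Ω] {μ : Measure Ω} [IsFiniteMeasure μ] (X : Sym2 V → Ω → ℝ)
    (h01 : ∀ e ω, X e ω = 0 ∨ X e ω = 1) {p : ℝ}
    (hprob : ∀ e ∈ G.edgeFinset, μ.real {ω | X e ω = 1} = p)
    (hpind : ∀ e ∈ G.edgeFinset, ∀ e' ∈ G.edgeFinset, e ≠ e' → IndepFun (X e) (X e') μ)
    {e : Sym2 V} (he : e ∈ G.edgeFinset) :
    p - #(adjacentEdges G e) * p ^ 2 ≤ μ.real {ω | e ∈ matchSet G fun e => X e ω} := by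
  have hpair : ∀ e' ∈ adjacentEdges G e,
      μ.real ({ω | X e ω = 1} ∩ {ω | X e' ω = 1}) = p ^ 2 := by
    intro e' he'
    obtain ⟨heG', hne, -⟩ := mem_filter.1 he'
    change μ.real (X e ⁻¹' {1} ∩ X e' ⁻¹' {1}) = p ^ 2
    rw [measureReal_def, (hpind e he e' heG' (Ne.symm hne)).measure_inter_preimage_eq_mul _ _
        (measurableSet_singleton 1) (measurableSet_singleton 1),
      ENNReal.toReal_mul, ← measureReal_def, ← measureReal_def]
    have hpe : μ.real (X e ⁻¹' {1}) = p := hprob e he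
    have hpe' : μ.real (X e' ⁻¹' {1}) = p := hprob e' heG'
    rw [hpe, hpe', sq]
  have hsub : {ω | X e ω = 1} \ ⋃ e' ∈ adjacentEdges G e, {ω | X e' ω = 1} ⊆
      {ω | e ∈ matchSet G fun e => X e ω} := by
    intro ω ⟨hω, hω'⟩
    simp only [Set.mem_iUnion, Set.mem_ofPred_eq, not_exists] at hω hω'
    refine (mem_matchSet_iff G).2 ⟨he, hω, fun e' he' => ?_⟩
    exact (h01 e' ω).resolve_right (hω' e' he')
  calc p - #(adjacentEdges G e) * p ^ 2
      = μ.real {ω | X e ω = 1} -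
          ∑ e' ∈ adjacentEdges G e, μ.real ({ω | X e ω = 1} ∩ {ω | X e' ω = 1}) := by
        rw [hprob e he, sum_congr rfl hpair, sum_const, nsmul_eq_mul]
    _ ≤ _ := sub_sum_measureReal_inter_le_measureReal_diff_biUnion _ _ _
    _ ≤ _ := measureReal_mono hsub

theorem exists_outcome_large_matching_general
    {V : Type*} [Fintype V] [DecidableEq V]
    (G : SimpleGraph V) [DecidableRel G.Adj]
    (hdeg : ∀ v, G.degree v ≤ 2)
    {Ω : Type*} [Fintype Ω] [MeasureSpace Ω] [MeasurableSingletonClass Ω]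
    [IsProbabilityMeasure (volume : Measure Ω)]
    (X : Sym2 V → Ω → ℝ)
    (h01 : ∀ e ω, X e ω = 0 ∨ X e ω = 1)
    (hprob : ∀ e ∈ G.edgeFinset, (volume {ω | X e ω = 1}).toReal = 1 / 4)
    (hpind : ∀ e ∈ G.edgeFinset, ∀ e' ∈ G.edgeFinset, e ≠ e' →
      ProbabilityTheory.IndepFun (X e) (X e') volume) :
    ∃ ω : Ω, 0 < volume ({ω} : Set Ω) ∧
      (G.edgeFinset.card : ℝ) / 8 ≤ ((matchSet G (fun e => X e ω)).card : ℝ) := by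
  obtain ⟨ω, hω, hmean⟩ := exists_measure_singleton_pos_integral_le (μ := volume)
    fun ω => (#(matchSet G fun e => X e ω) : ℝ)
  refine ⟨ω, hω, le_trans ?_ hmean⟩
  rw [integral_card_eq_sum_measureReal (fun ω => matchSet G fun e => X e ω) G.edgeFinset
    fun ω => filter_subset _ _]
  calc (#G.edgeFinset : ℝ) / 8 = ∑ e ∈ G.edgeFinset, (1 / 4 - 2 * (1 / 4) ^ 2 : ℝ) := by
        rw [sum_const, nsmul_eq_mul]; ring
    _ ≤ _ := sum_le_sum fun e he => by
        have hcard : (#(adjacentEdges G e) : ℝ) ≤ 2 :=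
          mod_cast card_adjacentEdges_le_two G hdeg he
        linarith [le_measureReal_mem_matchSet G X h01 hprob hpind he]

/-- On a finite probability space, pairwise independent 0-1 edge variables with success
probability `1/4` yield, with positive probability, an outcome whose induced matching has
size at least `m/8`. -/
theorem exists_outcome_large_matching
    {V : Type*} [Fintype V] [DecidableEq V]
    (G : SimpleGraph V) [DecidableRel G.Adj]
    (hdeg : ∀ v, G.degree v ≤ 2) (hm : 1 ≤ G.edgeFinset.card)
    {Ω : Type*} [Fintype Ω] [MeasureSpace Ω] [MeasurableSingletonClass Ω]
    [IsProbabilityMeasure (volume : Measure Ω)]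
    (X : Sym2 V → Ω → ℝ) (hmeas : ∀ e, Measurable (X e))
    (h01 : ∀ e ω, X e ω = 0 ∨ X e ω = 1)
    (hprob : ∀ e ∈ G.edgeFinset, (volume {ω | X e ω = 1}).toReal = 1 / 4)
    (hpind : ∀ e ∈ G.edgeFinset, ∀ e' ∈ G.edgeFinset, e ≠ e' →
      ProbabilityTheory.IndepFun (X e) (X e') volume) :
    ∃ ω : Ω, 0 < volume ({ω} : Set Ω) ∧
      (G.edgeFinset.card : ℝ) / 8 ≤ ((matchSet G (fun e => X e ω)).card : ℝ) :=
  exists_outcome_large_matching_general G hdeg X h01 hprob hpind
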